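/- Let M be an n × n matrix with rational entries and let t ∈ ℂ be a nonzero eigenvalue of M. Then t is algebraic over ℚ of degree at most rank(M), i.e. [ℚ(t) : ℚ] ≤ rank(M). -/

import Mathlib

open Polynomial Module

section Polynomial

theorem X_pow_natTrailingDegree_dvd {R : Type*} [Semiring R] (q : R[X]) :
    X ^ q.natTrailingDegree ∣ q :=
  X_pow_dvd_iff.mpr fun _ hd => coeff_eq_zero_of_lt_natTrailingDegree hd

variable {K L : Type*} [Field K] [CommRing L] [IsDomain L] [Algebra K L]

/-- A nonzero root of `q` is a root of `q` with its factor `X ^ natTrailingDegree` removed. -/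
theorem minpoly_natDegree_le_natDegree_sub_natTrailingDegree {x : L} (hx : x ≠ 0)
    {q : K[X]} (hq : q ≠ 0) (hqx : aeval x q = 0) :
    (minpoly K x).natDegree ≤ q.natDegree - q.natTrailingDegree := by
  obtain ⟨r, hqr⟩ := X_pow_natTrailingDegree_dvd q
  have hr : r ≠ 0 := by rintro rfl; exact hq (by simpa using hqr)
  have hrx : aeval x r = 0 := by
    rw [hqr, map_mul, map_pow, aeval_X] at hqx
    exact (mul_eq_zero.mp hqx).resolve_left (pow_ne_zero _ hx)
  have hdeg : q.natDegree = q.natTrailingDegree + r.natDegree := by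
    conv_lhs => rw [hqr]
    rw [natDegree_mul (pow_ne_zero _ X_ne_zero) hr, natDegree_X_pow]
  calc (minpoly K x).natDegree ≤ r.natDegree := natDegree_le_of_dvd (minpoly.dvd K x hrx) hr
    _ = q.natDegree - q.natTrailingDegree := by omega

end Polynomial

namespace Matrix

variable {n K : Type*} [Fintype n] [DecidableEq n] [Field K]

theorem aeval_charpoly_eq_zero_of_mem_spectrum_map {L : Type*} [Field L] [Algebra K L]
    {M : Matrix n n K} {t : L} (ht : t ∈ spectrum L (M.map (algebraMap K L))) :
    aeval t M.charpoly = 0 := by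
  rw [mem_spectrum_iff_isRoot_charpoly, charpoly_map] at ht
  rwa [aeval_def, eval₂_eq_eval_map]

/-- The zero eigenvalue has algebraic multiplicity at least its geometric one, `card n - rank`. -/
theorem charpoly_natDegree_sub_natTrailingDegree_le_rank (M : Matrix n n K) :
    M.charpoly.natDegree - M.charpoly.natTrailingDegree ≤ M.rank := by
  have hker : finrank K (LinearMap.ker M.toLin') ≤ M.charpoly.natTrailingDegree := by
    rw [← charpoly_toLin', ← LinearMap.finrank_maxGenEigenspace_zero_eq]
    refine Submodule.finrank_mono fun v hv => ?_
    exact (Module.End.mem_maxGenEigenspace _ _ _).mpr ⟨1, by simpa using hv⟩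
  have hrank : M.rank + finrank K (LinearMap.ker M.toLin') = Fintype.card n := by
    rw [Matrix.rank, ← toLin'_apply', LinearMap.finrank_range_add_finrank_ker, finrank_pi]
  rw [charpoly_natDegree_eq_dim]
  omega

end Matrix

theorem stmt3 {n : ℕ} (M : Matrix (Fin n) (Fin n) ℚ) (t : ℂ)
    (ht : t ≠ 0) (hev : t ∈ spectrum ℂ (M.map (Rat.cast : ℚ → ℂ))) :
    IsAlgebraic ℚ t ∧ (minpoly ℚ t).natDegree ≤ M.rank := by
  have hroot : aeval t M.charpoly = 0 :=
    Matrix.aeval_charpoly_eq_zero_of_mem_spectrum_map hev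
  exact ⟨⟨M.charpoly, M.charpoly_monic.ne_zero, hroot⟩,
    (minpoly_natDegree_le_natDegree_sub_natTrailingDegree ht M.charpoly_monic.ne_zero hroot).trans
      M.charpoly_natDegree_sub_natTrailingDegree_le_rank⟩
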